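/- arXiv:2009.03121 — 2 statements merged into one kernel-verified Lean document; each statement's English description precedes it below -/
import Mathlib

section
/- Let $({\sf M},{\sf g})$ be a complete $n$-dimensional Riemannian manifold and ${\rm Y}\subset{\sf M}$ an open connected subset whose boundary is weakly Lipschitz: there exist a constant $C>0$, a finite open cover $(U_i)_{i=1,\dots,k}$ of $\partial{\rm Y}$, and $C$-Lipschitz maps $\varphi_i: U_i\to\mathbb{R}^{n-1}$ with $(\varphi_i)_*\mathrm{vol}_{\partial{\rm Y}} \le C\cdot\mathrm{vol}_{\mathbb{R}^{n-1}}$ on $U_i$. If $V\in L^p(\partial{\rm Y}, \mathrm{vol}_{\partial{\rm Y}})$ for some $p>n-1$, then $\lim_{r\to0}\sup_{x\in{\sf M}} \int_{B_r(x)} \frac{|V(y)|}{{\sf d}(x,y)^{n-2}}\,\mathrm{vol}_{\partial{\rm Y}}(dy) = 0$. -/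
/-!
The Lipschitz charts with bounded push-forward make the surface measure upper Ahlfors regular
of dimension `n - 1`: `σ (closedBall x s) ≤ K * s ^ (n - 1)`. Summing over dyadic annuli, this
gives `∫_{B(x,r)} d(x,y)^(-β) dσ ≲ r ^ (n - 1 - β)` for `β < n - 1`. By Hölder with the
conjugate exponent `q` of `p`, the Riesz potential of `|V|` over `B(x,r)` is at most
`‖V‖_p * (∫_{B(x,r)} d(x,y)^(-(n-2)q) dσ)^(1/q) ≲ r ^ ((n - 1 - (n - 2) q) / q)`,
uniformly in `x`, and `(n - 2) q < n - 1` is exactly `p > n - 1`.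
-/

open MeasureTheory Filter Topology Metric Module

open scoped ENNReal NNReal

lemma tendsto_const_mul_ofReal_rpow_nhdsGT_zero {c : ℝ≥0∞} (hc : c ≠ ∞) {δ : ℝ}
    (hδ : 0 < δ) :
    Tendsto (fun r : ℝ => c * ENNReal.ofReal r ^ δ) (𝓝[>] 0) (𝓝 0) := by
  have h : Tendsto ENNReal.ofReal (𝓝[>] 0) (𝓝 0) := by
    simpa using ENNReal.continuous_ofReal.tendsto 0 |>.mono_left nhdsWithin_le_nhds
  exact (ENNReal.tendsto_const_mul_rpow_nhds_zero_of_pos hc hδ).comp h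

lemma ENNReal.ofReal_div_rpow_le {a t β : ℝ} (ha : 0 ≤ a) (ht : 0 ≤ t) (hβ : 0 ≤ β) :
    ENNReal.ofReal (a / t ^ β) ≤ ENNReal.ofReal a * ENNReal.ofReal t ^ (-β) := by
  rcases ht.eq_or_lt with rfl | ht
  · rcases hβ.eq_or_lt with rfl | hβ
    · simp
    · simp [Real.zero_rpow hβ.ne']
  · rw [div_eq_mul_inv, ← Real.rpow_neg ht.le, ENNReal.ofReal_mul ha,
      ENNReal.ofReal_rpow_of_pos ht]

section

variable {X : Type*} [PseudoMetricSpace X]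

lemma closedBall_diff_closedBall_zero_subset_iUnion (x : X) (r : ℝ) :
    closedBall x r \ closedBall x 0 ⊆
      ⋃ j : ℕ, closedBall x (r / 2 ^ j) \ closedBall x (r / 2 ^ j / 2) := by
  rintro y ⟨hyr : dist y x ≤ r, hy₀⟩
  have hy : 0 < dist y x := not_le.1 hy₀
  obtain ⟨j, hj, hj'⟩ := exists_nat_pow_near ((one_le_div hy).2 hyr) one_lt_two
  refine Set.mem_iUnion.2 ⟨j, mem_closedBall.2 ?_, fun h' => not_lt.2 (mem_closedBall.1 h') ?_⟩
  · rwa [le_div_iff₀ (by positivity), mul_comm, ← le_div_iff₀ hy]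
  · rwa [div_div, ← pow_succ, div_lt_iff₀ (by positivity), mul_comm, ← div_lt_iff₀ hy]

variable [MeasurableSpace X]

def IsUpperAhlforsRegular (μ : Measure X) (K : ℝ≥0∞) (d : ℝ) : Prop :=
  ∀ (x : X) (s : ℝ), 0 < s → μ (closedBall x s) ≤ K * ENNReal.ofReal s ^ d

section LipschitzCharts

variable {E : Type*} [NormedAddCommGroup E] [NormedSpace ℝ E] [FiniteDimensional ℝ E]
  [MeasurableSpace E] [BorelSpace E] (ν : Measure E) [ν.IsAddHaarMeasure] {μ : Measure X}
  {C : ℝ≥0} {c : ℝ≥0∞}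

lemma measure_closedBall_inter_le_of_lipschitzOnWith {U : Set X} {φ : X → E}
    (hφ : LipschitzOnWith C φ U)
    (hpush : ∀ s, MeasurableSet s → μ (φ ⁻¹' s ∩ U) ≤ c * ν s) (x : X) {s : ℝ}
    (hs : 0 ≤ s) :
    μ (closedBall x s ∩ U) ≤
      c * ν (ball 0 1) * ENNReal.ofReal (2 * C * s) ^ finrank ℝ E := by
  rcases (closedBall x s ∩ U).eq_empty_or_nonempty with he | ⟨y₀, hy₀, hy₀U⟩
  · simp [he]
  have hsub : closedBall x s ∩ U ⊆ φ ⁻¹' closedBall (φ y₀) (2 * C * s) ∩ U := by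
    rintro y ⟨hy, hyU⟩
    refine ⟨?_, hyU⟩
    calc dist (φ y) (φ y₀) ≤ C * dist y y₀ := hφ.dist_le_mul y hyU y₀ hy₀U
      _ ≤ C * (2 * s) := by
          gcongr
          linarith [dist_triangle_right y y₀ x, mem_closedBall.1 hy, mem_closedBall.1 hy₀]
      _ = 2 * C * s := by ring
  calc μ (closedBall x s ∩ U) ≤ c * ν (closedBall (φ y₀) (2 * C * s)) :=
        (measure_mono hsub).trans (hpush _ measurableSet_closedBall)
    _ = c * ν (ball 0 1) * ENNReal.ofReal (2 * C * s) ^ finrank ℝ E := by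
        rw [Measure.addHaar_closedBall _ _ (by positivity), ENNReal.ofReal_pow (by positivity)]
        ring

lemma exists_isUpperAhlforsRegular_of_lipschitzOnWith {ι : Type*} [Fintype ι]
    {U : ι → Set X} {φ : ι → X → E} (hnull : μ (⋃ i, U i)ᶜ = 0)
    (hφ : ∀ i, LipschitzOnWith C (φ i) (U i))
    (hpush : ∀ i s, MeasurableSet s → μ (φ i ⁻¹' s ∩ U i) ≤ c * ν s)
    (hc : c ≠ ∞) :
    ∃ K ≠ ∞, IsUpperAhlforsRegular μ K (finrank ℝ E) := by
  refine ⟨Fintype.card ι * (c * ν (ball 0 1) * ENNReal.ofReal (2 * C) ^ finrank ℝ E), ?_,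
    fun x s hs => ?_⟩
  · exact ENNReal.mul_ne_top (ENNReal.natCast_ne_top _) <| ENNReal.mul_ne_top
      (ENNReal.mul_ne_top hc measure_ball_lt_top.ne) (ENNReal.pow_ne_top ENNReal.ofReal_ne_top)
  have hsub : closedBall x s ⊆ (⋃ i, closedBall x s ∩ U i) ∪ (⋃ i, U i)ᶜ := by
    intro y hy
    by_cases h : y ∈ ⋃ i, U i
    · obtain ⟨i, hi⟩ := Set.mem_iUnion.1 h
      exact Or.inl (Set.mem_iUnion.2 ⟨i, hy, hi⟩)
    · exact Or.inr h
  calc μ (closedBall x s) ≤ μ (⋃ i, closedBall x s ∩ U i) + μ (⋃ i, U i)ᶜ :=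
        (measure_mono hsub).trans (measure_union_le _ _)
    _ ≤ ∑ i, μ (closedBall x s ∩ U i) := by
        rw [hnull, add_zero]; exact measure_iUnion_fintype_le _ _
    _ ≤ ∑ _i : ι, c * ν (ball 0 1) * ENNReal.ofReal (2 * C * s) ^ finrank ℝ E :=
        Finset.sum_le_sum fun i _ =>
          measure_closedBall_inter_le_of_lipschitzOnWith ν (hφ i) (hpush i) x hs.le
    _ = _ := by
        rw [Finset.sum_const, Finset.card_univ, nsmul_eq_mul, ENNReal.rpow_natCast,
          ENNReal.ofReal_mul (by positivity), mul_pow]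
        ring

end LipschitzCharts

namespace IsUpperAhlforsRegular

variable {μ : Measure X} {K : ℝ≥0∞} {d β p q : ℝ}

lemma measure_closedBall_zero (h : IsUpperAhlforsRegular μ K d) (hK : K ≠ ∞) (hd : 0 < d)
    (x : X) : μ (closedBall x 0) = 0 := by
  refine le_antisymm (ge_of_tendsto (tendsto_const_mul_ofReal_rpow_nhdsGT_zero hK hd) ?_) zero_le
  filter_upwards [self_mem_nhdsWithin] with s hs
  exact (measure_mono (closedBall_subset_closedBall (le_of_lt hs))).trans (h x s hs)

lemma setLIntegral_annulus_rpow_neg_le (h : IsUpperAhlforsRegular μ K d)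
    (hβ : 0 ≤ β) (x : X) {t : ℝ} (ht : 0 < t) :
    ∫⁻ y in closedBall x t \ closedBall x (t / 2), ENNReal.ofReal (dist x y) ^ (-β) ∂μ ≤
      2 ^ β * K * ENNReal.ofReal t ^ (d - β) := by
  set a := ENNReal.ofReal t
  have ha₀ : a ≠ 0 := by simpa [a] using ht
  have hbound : ∀ y ∈ closedBall x t \ closedBall x (t / 2),
      ENNReal.ofReal (dist x y) ^ (-β) ≤ (a / 2) ^ (-β) := by
    rintro y ⟨-, hy⟩
    have hy : t / 2 ≤ dist x y := by
      rw [dist_comm]; exact (not_le.1 fun h' => hy (mem_closedBall.2 h')).le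
    rw [ENNReal.rpow_neg, ENNReal.rpow_neg, show a / 2 = ENNReal.ofReal (t / 2) by
      rw [ENNReal.ofReal_div_of_pos two_pos, ENNReal.ofReal_ofNat]]
    gcongr
  calc ∫⁻ y in closedBall x t \ closedBall x (t / 2), ENNReal.ofReal (dist x y) ^ (-β) ∂μ
      ≤ (a / 2) ^ (-β) * μ (closedBall x t) :=
        (setLIntegral_mono measurable_const hbound).trans_eq (setLIntegral_const _ _) |>.trans
          (by gcongr; exact Set.sdiff_subset)
    _ ≤ (a / 2) ^ (-β) * (K * a ^ d) := by gcongr; exact h x t ht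
    _ = 2 ^ β * K * a ^ (d - β) := by
        rw [div_eq_mul_inv, ENNReal.mul_rpow_of_ne_zero ha₀ (by simp), ENNReal.inv_rpow,
          ← ENNReal.rpow_neg, neg_neg, sub_eq_add_neg,
          ENNReal.rpow_add _ _ ha₀ ENNReal.ofReal_ne_top]
        ring

lemma setLIntegral_closedBall_rpow_neg_le (h : IsUpperAhlforsRegular μ K d) (hK : K ≠ ∞)
    (hβ : 0 ≤ β) (hβd : β < d) (x : X) {r : ℝ} (hr : 0 < r) :
    ∫⁻ y in closedBall x r, ENNReal.ofReal (dist x y) ^ (-β) ∂μ ≤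
      2 ^ β * K * (1 - 2⁻¹ ^ (d - β))⁻¹ * ENNReal.ofReal r ^ (d - β) := by
  set γ := d - β
  have hγ : 0 < γ := sub_pos.2 hβd
  have hradius (j : ℕ) :
      ENNReal.ofReal (r / 2 ^ j) ^ γ = ENNReal.ofReal r ^ γ * (2⁻¹ ^ γ) ^ j := by
    rw [ENNReal.ofReal_div_of_pos (by positivity), ENNReal.ofReal_pow zero_le_two,
      ENNReal.ofReal_ofNat, div_eq_mul_inv, ENNReal.inv_pow,
      ENNReal.mul_rpow_of_nonneg _ _ hγ.le, ← ENNReal.rpow_natCast_mul, mul_comm (j : ℝ),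
      ENNReal.rpow_mul_natCast]
  -- for `β > 0` the kernel is infinite on `closedBall x 0`, which is `μ`-null
  calc ∫⁻ y in closedBall x r, ENNReal.ofReal (dist x y) ^ (-β) ∂μ
      ≤ ∫⁻ y in closedBall x 0 ∪ (closedBall x r \ closedBall x 0),
          ENNReal.ofReal (dist x y) ^ (-β) ∂μ :=
        lintegral_mono_set fun y hy => by by_cases hy₀ : y ∈ closedBall x 0 <;> simp_all
    _ ≤ ∫⁻ y in ⋃ j : ℕ, closedBall x (r / 2 ^ j) \ closedBall x (r / 2 ^ j / 2),
          ENNReal.ofReal (dist x y) ^ (-β) ∂μ := by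
        refine (lintegral_union_le _ _ _).trans ?_
        rw [setLIntegral_measure_zero _ _ (h.measure_closedBall_zero hK (hβ.trans_lt hβd) x),
          zero_add]
        exact lintegral_mono_set (closedBall_diff_closedBall_zero_subset_iUnion x r)
    _ ≤ ∑' j : ℕ, 2 ^ β * K * ENNReal.ofReal (r / 2 ^ j) ^ γ :=
        (lintegral_iUnion_le _ _).trans <| ENNReal.tsum_le_tsum fun j =>
          h.setLIntegral_annulus_rpow_neg_le hβ x (by positivity)
    _ = 2 ^ β * K * (1 - 2⁻¹ ^ γ)⁻¹ * ENNReal.ofReal r ^ γ := by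
        simp_rw [hradius, ← mul_assoc, ENNReal.tsum_mul_left, ENNReal.tsum_geometric]
        ring

variable [OpensMeasurableSpace X]

lemma setLIntegral_closedBall_mul_rpow_neg_le (h : IsUpperAhlforsRegular μ K d) (hK : K ≠ ∞)
    (hpq : p.HolderConjugate q) (hβ : 0 ≤ β) (hβq : β * q < d) {V : X → ℝ}
    (hV : AEMeasurable V μ) (x : X) {r : ℝ} (hr : 0 < r) :
    ∫⁻ y in closedBall x r, ENNReal.ofReal |V y| * ENNReal.ofReal (dist x y) ^ (-β) ∂μ ≤
      eLpNorm V (ENNReal.ofReal p) μ * (2 ^ (β * q) * K * (1 - 2⁻¹ ^ (d - β * q))⁻¹ *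
        ENNReal.ofReal r ^ (d - β * q)) ^ (1 / q) := by
  have hkernel : Measurable fun y => ENNReal.ofReal (dist x y) ^ (-β) := by fun_prop
  have hnorm : eLpNorm V (ENNReal.ofReal p) μ =
      (∫⁻ y, ENNReal.ofReal |V y| ^ p ∂μ) ^ (1 / p) := by
    simp_rw [eLpNorm_eq_lintegral_rpow_enorm_toReal (by simpa using hpq.pos)
      ENNReal.ofReal_ne_top, ENNReal.toReal_ofReal hpq.nonneg, Real.enorm_eq_ofReal_abs]
  calc ∫⁻ y in closedBall x r, ENNReal.ofReal |V y| * ENNReal.ofReal (dist x y) ^ (-β) ∂μ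
      ≤ (∫⁻ y in closedBall x r, ENNReal.ofReal |V y| ^ p ∂μ) ^ (1 / p) *
          (∫⁻ y in closedBall x r, (ENNReal.ofReal (dist x y) ^ (-β)) ^ q ∂μ) ^ (1 / q) :=
        ENNReal.lintegral_mul_le_Lp_mul_Lq _ hpq (hV.restrict.abs.ennreal_ofReal)
          hkernel.aemeasurable
    _ ≤ _ := by
        rw [hnorm]
        simp_rw [← ENNReal.rpow_mul, neg_mul]
        gcongr
        · exact hpq.one_div_nonneg
        · exact Measure.restrict_le_self
        · exact hpq.symm.one_div_nonneg
        · exact h.setLIntegral_closedBall_rpow_neg_le hK (mul_nonneg hβ hpq.symm.nonneg) hβq x hr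

theorem tendsto_iSup_setLIntegral_mul_rpow_neg (h : IsUpperAhlforsRegular μ K d) (hK : K ≠ ∞)
    (hpq : p.HolderConjugate q) (hβ : 0 ≤ β) (hβq : β * q < d) {V : X → ℝ}
    (hV : MemLp V (ENNReal.ofReal p) μ) :
    Tendsto (fun r : ℝ => ⨆ x : X,
        ∫⁻ y in closedBall x r, ENNReal.ofReal |V y| * ENNReal.ofReal (dist x y) ^ (-β) ∂μ)
      (𝓝[>] 0) (𝓝 0) := by
  set γ := d - β * q
  have hγ : 0 < γ := sub_pos.2 hβq
  have hq : 0 < q := hpq.symm.pos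
  set K' := 2 ^ (β * q) * K * (1 - 2⁻¹ ^ γ)⁻¹
  have hK' : K' ≠ ∞ := by
    refine ENNReal.mul_ne_top (ENNReal.mul_ne_top ?_ hK) (ENNReal.inv_ne_top.2 ?_)
    · exact ENNReal.rpow_ne_top_of_nonneg (by positivity) ENNReal.ofNat_ne_top
    · exact (tsub_pos_of_lt (ENNReal.rpow_lt_one (by norm_num) hγ)).ne'
  have hc : eLpNorm V (ENNReal.ofReal p) μ * K' ^ (1 / q) ≠ ∞ :=
    ENNReal.mul_ne_top hV.eLpNorm_ne_top
      (ENNReal.rpow_ne_top_of_nonneg hpq.symm.one_div_nonneg hK')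
  refine tendsto_of_tendsto_of_tendsto_of_le_of_le' tendsto_const_nhds
    (tendsto_const_mul_ofReal_rpow_nhdsGT_zero hc (by positivity : 0 < γ * (1 / q)))
    (Eventually.of_forall fun r => zero_le) ?_
  filter_upwards [self_mem_nhdsWithin] with r hr
  refine iSup_le fun x => (h.setLIntegral_closedBall_mul_rpow_neg_le hK hpq hβ hβq
    hV.aemeasurable x hr).trans_eq ?_
  rw [ENNReal.mul_rpow_of_nonneg _ _ hpq.symm.one_div_nonneg, ← ENNReal.rpow_mul]
  ring

end IsUpperAhlforsRegular

end

theorem surface_lp_kato_general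
    {M : Type*} [MetricSpace M] [MeasurableSpace M] [BorelSpace M]
    (n : ℕ) (hn : 2 ≤ n)
    (Y : Set M)
    (σ : Measure M)
    (hσsupp : ∀ s : Set M, MeasurableSet s → s ∩ frontier Y = ∅ → σ s = 0)
    (k : ℕ) (U : Fin k → Set M) (hUopen : ∀ i, IsOpen (U i))
    (hcover : frontier Y ⊆ ⋃ i, U i)
    (C : NNReal)
    (φ : Fin k → M → EuclideanSpace ℝ (Fin (n - 1)))
    (hφlip : ∀ i, LipschitzOnWith C (φ i) (U i))
    (hφpush : ∀ i, ∀ s : Set (EuclideanSpace ℝ (Fin (n - 1))), MeasurableSet s →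
      σ ((φ i) ⁻¹' s ∩ U i) ≤ (C : ENNReal) * volume s)
    (p : ℝ) (hp : (n : ℝ) - 1 < p)
    (V : M → ℝ) (hV : MemLp V (ENNReal.ofReal p) σ) :
    Tendsto
      (fun r : ℝ => ⨆ x : M,
        ∫⁻ y in Metric.ball x r, ENNReal.ofReal (|V y| / dist x y ^ ((n : ℝ) - 2)) ∂σ)
      (𝓝[>] 0) (𝓝 0) := by
  have hn' : (2 : ℝ) ≤ n := by exact_mod_cast hn
  have hnull : σ (⋃ i, U i)ᶜ = 0 :=
    hσsupp _ (MeasurableSet.iUnion fun i => (hUopen i).measurableSet).compl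
      (Set.eq_empty_of_forall_notMem fun y hy => hy.1 (hcover hy.2))
  obtain ⟨K, hK, hreg⟩ :=
    exists_isUpperAhlforsRegular_of_lipschitzOnWith volume hnull hφlip hφpush ENNReal.coe_ne_top
  rw [finrank_euclideanSpace_fin, Nat.cast_sub (by omega), Nat.cast_one] at hreg
  have hpq : p.HolderConjugate p.conjExponent := .conjExponent (by linarith)
  have hβq : ((n : ℝ) - 2) * p.conjExponent < n - 1 := by
    rw [Real.conjExponent, mul_div_assoc', div_lt_iff₀ (by linarith)]
    linarith
  refine tendsto_of_tendsto_of_tendsto_of_le_of_le tendsto_const_nhds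
    (hreg.tendsto_iSup_setLIntegral_mul_rpow_neg hK hpq (by linarith) hβq hV)
    (fun r => zero_le) fun r => iSup_mono fun x => ?_
  calc ∫⁻ y in ball x r, ENNReal.ofReal (|V y| / dist x y ^ ((n : ℝ) - 2)) ∂σ
      ≤ ∫⁻ y in ball x r,
          ENNReal.ofReal |V y| * ENNReal.ofReal (dist x y) ^ (-((n : ℝ) - 2)) ∂σ :=
        lintegral_mono fun y =>
          ENNReal.ofReal_div_rpow_le (abs_nonneg _) dist_nonneg (by linarith)
    _ ≤ _ := lintegral_mono_set ball_subset_closedBall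

/-- `L^p` criterion for the density of a surface measure to lie in the Kato class:
if the boundary of an open connected set `Y` is weakly Lipschitz and
`V ∈ L^p(∂Y, vol_{∂Y})` for some `p > n-1`, then the localized Riesz potential of `|V|`
with respect to the surface measure tends to zero uniformly as the radius shrinks. -/
theorem surface_lp_kato
    {M : Type*} [MetricSpace M] [CompleteSpace M] [MeasurableSpace M] [BorelSpace M]
    (n : ℕ) (hn : 2 ≤ n)
    (Y : Set M) (hYopen : IsOpen Y) (hYconn : IsConnected Y)
    (σ : Measure M)
    (hσsupp : ∀ s : Set M, MeasurableSet s → s ∩ frontier Y = ∅ → σ s = 0)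
    (k : ℕ) (U : Fin k → Set M) (hUopen : ∀ i, IsOpen (U i))
    (hcover : frontier Y ⊆ ⋃ i, U i)
    (C : NNReal) (hC : 0 < C)
    (φ : Fin k → M → EuclideanSpace ℝ (Fin (n - 1)))
    (hφlip : ∀ i, LipschitzOnWith C (φ i) (U i))
    (hφpush : ∀ i, ∀ s : Set (EuclideanSpace ℝ (Fin (n - 1))), MeasurableSet s →
      σ ((φ i) ⁻¹' s ∩ U i) ≤ (C : ENNReal) * volume s)
    (p : ℝ) (hp : (n : ℝ) - 1 < p)
    (V : M → ℝ) (hV : MemLp V (ENNReal.ofReal p) σ) :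
    Tendsto
      (fun r : ℝ => ⨆ x : M,
        ∫⁻ y in Metric.ball x r, ENNReal.ofReal (|V y| / dist x y ^ ((n : ℝ) - 2)) ∂σ)
      (𝓝[>] 0) (𝓝 0) :=
  surface_lp_kato_general n hn Y σ hσsupp k U hUopen hcover C φ hφlip hφpush p hp V hV
end

section
/- Self-improvement corollary: Under the assumption $|H[f](g,h)|^2 \le R(f)\,\Gamma(g)\,\Gamma(h)$ with $R(f):=\gamma_2(f)-\frac{2}{N}({\sf L}f)^2\ge0$, and using the identity $H[f](g,h) + H[g](f,h) = \Gamma(\Gamma(f,g),h)$, one deduces $\Gamma(\Gamma(f,g))^{1/2} \le R(f)^{1/2}\,\Gamma(g)^{1/2} + R(g)^{1/2}\,\Gamma(f)^{1/2}$, and in particular $\Gamma(\Gamma(f)) \le 4\,R(f)\,\Gamma(f)$. -/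
open MeasureTheory

/-- `H[f](g,h) := ½(Γ(g,Γ(f,h)) + Γ(h,Γ(f,g)) - Γ(f,Γ(g,h)))`. -/
noncomputable def Hform {X : Type*} (Γ : (X → ℝ) → (X → ℝ) → (X → ℝ))
    (f g h : X → ℝ) (x : X) : ℝ :=
  (1 / 2) * (Γ g (Γ f h) x + Γ h (Γ f g) x - Γ f (Γ g h) x)

/-- Self-improvement corollary: from `|H[f](g,h)|² ≤ R(f)Γ(g)Γ(h)` and the identity
`H[f](g,h) + H[g](f,h) = Γ(Γ(f,g),h)` one deduces
`√Γ(Γ(f,g)) ≤ √R(f)·√Γ(g) + √R(g)·√Γ(f)` and `Γ(Γ(f)) ≤ 4 R(f) Γ(f)` a.e. -/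
theorem selfimprovement_corollary
    {X : Type*} [MeasurableSpace X] (m : Measure X)
    (𝒜 : Set (X → ℝ))
    (Γ : (X → ℝ) → (X → ℝ) → (X → ℝ))
    (R : (X → ℝ) → X → ℝ)
    (hRnonneg : ∀ f ∈ 𝒜, ∀ᵐ x ∂m, 0 ≤ R f x)
    (hΓnonneg : ∀ f ∈ 𝒜, ∀ᵐ x ∂m, 0 ≤ Γ f f x)
    (hH : ∀ f ∈ 𝒜, ∀ g ∈ 𝒜, ∀ h : X → ℝ, ∀ᵐ x ∂m,
      (Hform Γ f g h x) ^ 2 ≤ R f x * Γ g g x * Γ h h x)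
    (hid : ∀ f ∈ 𝒜, ∀ g ∈ 𝒜, ∀ h : X → ℝ, ∀ x,
      Hform Γ f g h x + Hform Γ g f h x = Γ (Γ f g) h x) :
    (∀ f ∈ 𝒜, ∀ g ∈ 𝒜, ∀ᵐ x ∂m,
      Real.sqrt (Γ (Γ f g) (Γ f g) x) ≤
        Real.sqrt (R f x) * Real.sqrt (Γ g g x) +
        Real.sqrt (R g x) * Real.sqrt (Γ f f x)) ∧
    (∀ f ∈ 𝒜, ∀ᵐ x ∂m, Γ (Γ f f) (Γ f f) x ≤ 4 * R f x * Γ f f x) := by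
  have main : ∀ f ∈ 𝒜, ∀ g ∈ 𝒜, ∀ᵐ x ∂m,
      Real.sqrt (Γ (Γ f g) (Γ f g) x) ≤
        Real.sqrt (R f x) * Real.sqrt (Γ g g x) +
        Real.sqrt (R g x) * Real.sqrt (Γ f f x) := by
    intro f hf g hg
    filter_upwards [hRnonneg f hf, hRnonneg g hg, hΓnonneg f hf, hΓnonneg g hg,
      hH f hf g hg (Γ f g), hH g hg f hf (Γ f g)] with x hRf hRg hΓf hΓg h1 h2
    set t := Γ (Γ f g) (Γ f g) x with ht
    set c := Real.sqrt (R f x) * Real.sqrt (Γ g g x) +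
        Real.sqrt (R g x) * Real.sqrt (Γ f f x) with hc
    have hc0 : 0 ≤ c := by positivity
    rcases le_or_gt t 0 with h | h
    · rw [Real.sqrt_eq_zero_of_nonpos h]; exact hc0
    · have hst : 0 < Real.sqrt t := Real.sqrt_pos.mpr h
      have habs1 : |Hform Γ f g (Γ f g) x| ≤
          Real.sqrt (R f x) * Real.sqrt (Γ g g x) * Real.sqrt t := by
        rw [← Real.sqrt_mul hRf, ← Real.sqrt_mul (mul_nonneg hRf hΓg)]
        rw [← Real.sqrt_sq_eq_abs]
        exact Real.sqrt_le_sqrt h1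
      have habs2 : |Hform Γ g f (Γ f g) x| ≤
          Real.sqrt (R g x) * Real.sqrt (Γ f f x) * Real.sqrt t := by
        rw [← Real.sqrt_mul hRg, ← Real.sqrt_mul (mul_nonneg hRg hΓf)]
        rw [← Real.sqrt_sq_eq_abs]
        exact Real.sqrt_le_sqrt h2
      have hsum : t ≤ c * Real.sqrt t := by
        calc t = Hform Γ f g (Γ f g) x + Hform Γ g f (Γ f g) x := (hid f hf g hg (Γ f g) x).symm
          _ ≤ |Hform Γ f g (Γ f g) x| + |Hform Γ g f (Γ f g) x| :=
              add_le_add (le_abs_self _) (le_abs_self _)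
          _ ≤ Real.sqrt (R f x) * Real.sqrt (Γ g g x) * Real.sqrt t +
              Real.sqrt (R g x) * Real.sqrt (Γ f f x) * Real.sqrt t := add_le_add habs1 habs2
          _ = c * Real.sqrt t := by ring
      have : Real.sqrt t * Real.sqrt t ≤ c * Real.sqrt t := by
        rwa [Real.mul_self_sqrt h.le]
      exact le_of_mul_le_mul_right this hst
  refine ⟨main, ?_⟩
  intro f hf
  filter_upwards [main f hf f hf, hRnonneg f hf, hΓnonneg f hf] with x hx hRf hΓf
  rcases le_or_gt (Γ (Γ f f) (Γ f f) x) 0 with h | h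
  · exact h.trans (by positivity)
  · have := Real.sqrt_le_sqrt (le_of_eq (rfl : Γ (Γ f f) (Γ f f) x = _))
    have hsq : Γ (Γ f f) (Γ f f) x = Real.sqrt (Γ (Γ f f) (Γ f f) x) ^ 2 :=
      (Real.sq_sqrt h.le).symm
    rw [hsq]
    calc Real.sqrt (Γ (Γ f f) (Γ f f) x) ^ 2
        ≤ (Real.sqrt (R f x) * Real.sqrt (Γ f f x) +
            Real.sqrt (R f x) * Real.sqrt (Γ f f x)) ^ 2 :=
          pow_le_pow_left₀ (Real.sqrt_nonneg _) hx 2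
      _ = 4 * (Real.sqrt (R f x) ^ 2 * Real.sqrt (Γ f f x) ^ 2) := by ring
      _ = 4 * R f x * Γ f f x := by rw [Real.sq_sqrt hRf, Real.sq_sqrt hΓf]; ring
end
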